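/- arXiv:0911.1869 — 7 statements merged into one kernel-verified Lean document; each statement's English description precedes it below -/
import Mathlib

section
/- If a measure-preserving system (X, B, μ, f) with f a measurable map and μ a non-singular probability measure is exact (i.e., for every n ≥ 0, if A ∈ B satisfies f^{-n}(f^n(A)) = A for all n, then μ(A) = 0 or 1), then the product system (X × X, μ × μ, f × f) is ergodic. -/
/-!
Every `(f × f)`-invariant set `U` satisfies `(x, y) ∈ U ↔ (fⁿ x, fⁿ y) ∈ U`, so each vertical
section `Uₓ` is the `fⁿ`-preimage of the section over `fⁿ x`. A preimage under `fⁿ` is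
`fⁿ`-saturated, so by exactness every section has measure `0` or `1`. For the same reason the
set `S` of points with a full section is a preimage under every `fⁿ`, hence also has measure
`0` or `1`, and by Fubini `(μ × μ) U = μ S`.
-/

open MeasureTheory Set

theorem Set.preimage_prodMk_eq_preimage_iterate {X Y : Type*} {f : X → X} {g : Y → Y}
    {U : Set (X × Y)} (hU : Prod.map f g ⁻¹' U = U) (n : ℕ) (x : X) :
    Prod.mk x ⁻¹' U = g^[n] ⁻¹' (Prod.mk (f^[n] x) ⁻¹' U) := by
  have hUn : Prod.map f^[n] g^[n] ⁻¹' U = U := by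
    rw [← Prod.map_iterate, preimage_iterate_eq]
    exact Function.iterate_fixed hU n
  conv_lhs => rw [← hUn]
  rfl

theorem MeasureTheory.Measure.prod_apply_eq_measure_setOf_eq_one {X Y : Type*}
    [MeasurableSpace X] [MeasurableSpace Y] (μ : Measure X) (ν : Measure Y) [SFinite ν]
    {U : Set (X × Y)} (hU : MeasurableSet U)
    (h01 : ∀ x, ν (Prod.mk x ⁻¹' U) = 0 ∨ ν (Prod.mk x ⁻¹' U) = 1) :
    μ.prod ν U = μ {x | ν (Prod.mk x ⁻¹' U) = 1} := by
  have hS : MeasurableSet {x | ν (Prod.mk x ⁻¹' U) = 1} :=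
    measurable_measure_prodMk_left hU (measurableSet_singleton 1)
  rw [Measure.prod_apply hU, ← lintegral_indicator_one hS]
  congr 1
  funext x
  rcases h01 x with h | h <;> simp [h]

theorem exact_implies_product_ergodic_general
    {X : Type*} [MeasurableSpace X] (μ : Measure X) [IsProbabilityMeasure μ]
    (f : X → X)
    (hexact : ∀ A : Set X, MeasurableSet A →
      (∀ n : ℕ, f^[n] ⁻¹' (f^[n] '' A) = A) → μ A = 0 ∨ μ A = 1) :
    ∀ U : Set (X × X), MeasurableSet U → (Prod.map f f) ⁻¹' U = U →
      (μ.prod μ) U = 0 ∨ (μ.prod μ) U = 1 := by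
  intro U hU hinv
  have hsec := preimage_prodMk_eq_preimage_iterate hinv
  have hsec01 : ∀ x, μ (Prod.mk x ⁻¹' U) = 0 ∨ μ (Prod.mk x ⁻¹' U) = 1 := fun x =>
    hexact _ (measurable_prodMk_left hU) fun n => by rw [hsec n x, preimage_image_preimage]
  rw [Measure.prod_apply_eq_measure_setOf_eq_one μ μ hU hsec01]
  refine hexact _ (measurable_measure_prodMk_left hU (measurableSet_singleton 1)) fun n => ?_
  have hfull : {x | μ (Prod.mk x ⁻¹' U) = 1} =
      f^[n] ⁻¹' {z | μ (f^[n] ⁻¹' (Prod.mk z ⁻¹' U)) = 1} := by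
    ext x
    exact Iff.of_eq (congrArg (μ · = 1) (hsec n x))
  rw [hfull, preimage_image_preimage]

/-- If a non-singular probability system is exact, then the product system is ergodic. -/
theorem exact_implies_product_ergodic
    {X : Type*} [MeasurableSpace X] (μ : Measure X) [IsProbabilityMeasure μ]
    (f : X → X) (hf : Measurable f)
    (hns : ∀ A : Set X, MeasurableSet A → (μ A = 0 ↔ μ (f ⁻¹' A) = 0))
    (hexact : ∀ A : Set X, MeasurableSet A →
      (∀ n : ℕ, f^[n] ⁻¹' (f^[n] '' A) = A) → μ A = 0 ∨ μ A = 1) :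
    ∀ U : Set (X × X), MeasurableSet U → (Prod.map f f) ⁻¹' U = U →
      (μ.prod μ) U = 0 ∨ (μ.prod μ) U = 1 :=
  exact_implies_product_ergodic_general μ f hexact
end

section
/- If (I, μ, f) is exact, where I = [0,1] and μ is a non-singular Borel probability measure with no atoms concentrating the measure, then the set Dis of distal pairs has μ×μ-measure zero, where a pair (x,y) is distal if liminf_{n→∞} |f^n(x) − f^n(y)| > 0. -/
open MeasureTheory Set Filter

/-- Pigeonhole: `m` points in `[0,1]` with pairwise distances at least `η` force
`m * η ≤ 3`. -/
lemma pigeon_aux {m : ℕ} {η : ℝ} (hη : 0 < η) (hη1 : η ≤ 1) (y : Fin m → ℝ)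
    (hy : ∀ i, y i ∈ Set.Icc (0:ℝ) 1)
    (hd : ∀ i j, i ≠ j → η ≤ |y i - y j|) :
    (m : ℝ) * η ≤ 3 := by
  set J : Fin m → Set ℝ := fun i => Set.Ioo (y i - η / 2) (y i + η / 2) with hJ
  have hdisj : Pairwise (Function.onFun Disjoint J) := by
    intro i j hij
    refine Set.disjoint_left.mpr fun z hz1 hz2 => ?_
    have h := hd i j hij
    rcases le_abs.mp h with h' | h'
    · simp only [hJ, Set.mem_Ioo] at hz1 hz2; linarith
    · simp only [hJ, Set.mem_Ioo] at hz1 hz2; linarith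
  have hmeas : ∀ i, MeasurableSet (J i) := fun i => measurableSet_Ioo
  have hsub : (⋃ i, J i) ⊆ Set.Ioo (-1 : ℝ) 2 := by
    intro z hz
    obtain ⟨i, hi⟩ := Set.mem_iUnion.mp hz
    have h0 := (hy i).1
    have h1 := (hy i).2
    simp only [hJ, Set.mem_Ioo] at hi ⊢
    constructor <;> [linarith; linarith]
  have h1 : volume (⋃ i, J i) = ∑' i : Fin m, volume (J i) :=
    measure_iUnion hdisj hmeas
  have h2 : volume (⋃ i, J i) ≤ volume (Set.Ioo (-1 : ℝ) 2) :=
    measure_mono hsub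
  have h3 : ∀ i, volume (J i) = ENNReal.ofReal η := by
    intro i
    rw [hJ]
    simp only [Real.volume_Ioo]
    ring_nf
  have h4 : (∑' i : Fin m, volume (J i)) = (m : ENNReal) * ENNReal.ofReal η := by
    simp only [h3, tsum_fintype, Finset.sum_const, Finset.card_univ, Fintype.card_fin,
      nsmul_eq_mul]
  have h5 : (m : ENNReal) * ENNReal.ofReal η ≤ ENNReal.ofReal 3 := by
    rw [← h4, ← h1]
    have hv : volume (Set.Ioo (-1 : ℝ) 2) = ENNReal.ofReal 3 := by
      rw [Real.volume_Ioo]; norm_num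
    rwa [hv] at h2
  have h6 : ENNReal.ofReal ((m : ℝ) * η) ≤ ENNReal.ofReal 3 := by
    rw [ENNReal.ofReal_mul (by positivity), ENNReal.ofReal_natCast]
    exact h5
  exact (ENNReal.ofReal_le_ofReal_iff (by norm_num)).mp h6

/-- If `([0,1], μ, f)` is exact with `μ` non-singular, non-atomic, then the set of
distal pairs has `μ × μ`-measure zero. -/
theorem exact_distal_pairs_measure_zero
    (f : Set.Icc (0:ℝ) 1 → Set.Icc (0:ℝ) 1) (hf : Measurable f)
    (μ : Measure (Set.Icc (0:ℝ) 1)) [IsProbabilityMeasure μ]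
    (hns : ∀ A : Set (Set.Icc (0:ℝ) 1), MeasurableSet A → (μ A = 0 ↔ μ (f ⁻¹' A) = 0))
    (hna : ∀ x : Set.Icc (0:ℝ) 1, μ {x} = 0)
    (hexact : ∀ A : Set (Set.Icc (0:ℝ) 1), MeasurableSet A →
      (∀ n : ℕ, f^[n] ⁻¹' (f^[n] '' A) = A) → μ A = 0 ∨ μ A = 1) :
    (μ.prod μ) {p : Set.Icc (0:ℝ) 1 × Set.Icc (0:ℝ) 1 |
      0 < Filter.atTop.liminf fun n : ℕ =>
        |(f^[n] p.1 : ℝ) - (f^[n] p.2 : ℝ)|} = 0 := by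
  classical
  set d : Set.Icc (0:ℝ) 1 → Set.Icc (0:ℝ) 1 → ℕ → ℝ := fun x y n => |(f^[n] x : ℝ) - (f^[n] y : ℝ)| with hd_def
  set L : Set.Icc (0:ℝ) 1 → Set.Icc (0:ℝ) 1 → ℝ := fun x y => Filter.atTop.liminf (d x y) with hL_def
  set D : Set (Set.Icc (0:ℝ) 1 × Set.Icc (0:ℝ) 1) := {p : Set.Icc (0:ℝ) 1 × Set.Icc (0:ℝ) 1 | 0 < L p.1 p.2} with hD_def
  -- measurability of the one-variable distance functions
  have hdm : ∀ (x : Set.Icc (0:ℝ) 1) (n : ℕ), Measurable fun y => d x y n := by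
    intro x n
    apply Measurable.abs
    exact measurable_const.sub ((hf.iterate n).subtype_coe)
  have hLm : ∀ x : Set.Icc (0:ℝ) 1, Measurable (L x) := fun x => Measurable.liminf (hdm x)
  -- the sets Y_ε for a fixed x
  set S : ℝ → Set.Icc (0:ℝ) 1 → Set (Set.Icc (0:ℝ) 1) := fun ε x => {y | ε ≤ L x y} with hS_def
  have hSm : ∀ (ε : ℝ) (x : Set.Icc (0:ℝ) 1), MeasurableSet (S ε x) := fun ε x =>
    measurableSet_le measurable_const (hLm x)
  have hLsymm : ∀ x y : Set.Icc (0:ℝ) 1, L x y = L y x := by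
    intro x y
    have : d x y = d y x := funext fun n => abs_sub_comm _ _
    rw [hL_def]; simp only [this]
  -- saturation of S ε x
  have hsat : ∀ (ε : ℝ) (x : Set.Icc (0:ℝ) 1) (n : ℕ), f^[n] ⁻¹' (f^[n] '' S ε x) = S ε x := by
    intro ε x n
    apply Set.Subset.antisymm
    · rintro y' ⟨y, hy, hyy'⟩
      have hev : ∀ᶠ m in Filter.atTop, d x y' m = d x y m := by
        rw [Filter.eventually_atTop]
        refine ⟨n, fun m hm => ?_⟩
        have : f^[m] y' = f^[m] y := by
          rw [← Nat.sub_add_cancel hm, Function.iterate_add_apply, Function.iterate_add_apply,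
            hyy']
        simp only [hd_def, this]
      have : L x y' = L x y := Filter.liminf_congr hev
      show ε ≤ L x y'
      rw [this]; exact hy
    · exact Set.subset_preimage_image _ _
  have hS01 : ∀ (ε : ℝ) (x : Set.Icc (0:ℝ) 1), μ (S ε x) = 0 ∨ μ (S ε x) = 1 := fun ε x =>
    hexact _ (hSm ε x) (hsat ε x)
  -- measurability of D
  have hDm : MeasurableSet D := by
    apply measurableSet_lt measurable_const
    apply Measurable.liminf
    intro n
    apply Measurable.abs
    exact (((hf.iterate n).comp measurable_fst).subtype_coe).sub
      (((hf.iterate n).comp measurable_snd).subtype_coe)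
  show μ.prod μ D = 0
  by_contra hpos
  -- positivity of slices on a positive-measure set
  set g : Set.Icc (0:ℝ) 1 → ENNReal := fun x => μ (Prod.mk x ⁻¹' D) with hg_def
  have hgm : Measurable g := measurable_measure_prodMk_left hDm
  have h1 : μ {x | g x ≠ 0} ≠ 0 := by
    intro h0
    apply hpos
    rw [Measure.prod_apply hDm]
    rw [lintegral_eq_zero_iff hgm]
    exact ae_iff.mpr (by simpa using h0)
  have h2 : {x | g x ≠ 0} ⊆ ⋃ k : ℕ, {x | μ (S (1 / ((k : ℝ) + 1)) x) = 1} := by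
    intro x hx
    have hsub : Prod.mk x ⁻¹' D ⊆ ⋃ k : ℕ, S (1 / ((k : ℝ) + 1)) x := by
      intro y hy
      have hy' : 0 < L x y := hy
      obtain ⟨k, hk⟩ := exists_nat_one_div_lt hy'
      exact Set.mem_iUnion.mpr ⟨k, le_of_lt hk⟩
    by_contra hcon
    simp only [Set.mem_iUnion, Set.mem_setOf_eq, not_exists] at hcon
    have hz : ∀ k : ℕ, μ (S (1 / ((k : ℝ) + 1)) x) = 0 := fun k =>
      (hS01 _ x).resolve_right (hcon k)
    exact hx (measure_mono_null hsub (measure_iUnion_null hz))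
  obtain ⟨k, hk⟩ : ∃ k : ℕ, μ {x | μ (S (1 / ((k : ℝ) + 1)) x) = 1} ≠ 0 := by
    by_contra hcon
    push_neg at hcon
    exact h1 (measure_mono_null h2 (measure_iUnion_null hcon))
  set ε : ℝ := 1 / ((k : ℝ) + 1) with hε_def
  have hε : 0 < ε := by positivity
  have hε1 : ε ≤ 1 := by
    rw [hε_def, div_le_one (by positivity)]
    have : (0:ℝ) ≤ (k : ℝ) := Nat.cast_nonneg k
    linarith
  set X : Set (Set.Icc (0:ℝ) 1) := {x | μ (S ε x) = 1} with hX_def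
  -- recursive construction of points with pairwise-distal orbits
  have key : ∀ m : ℕ, ∃ x : Fin m → Set.Icc (0:ℝ) 1, (∀ i, x i ∈ X) ∧
      ∀ i j, i ≠ j → ε ≤ L (x i) (x j) := by
    intro m
    induction m with
    | zero => exact ⟨fun i => i.elim0, fun i => i.elim0, fun i => i.elim0⟩
    | succ m ih =>
      obtain ⟨x, hxX, hxd⟩ := ih
      set T : Set (Set.Icc (0:ℝ) 1) := ⋂ i : Fin m, S ε (x i) with hT_def
      have hTc : μ Tᶜ = 0 := by
        rw [hT_def, Set.compl_iInter]
        apply measure_iUnion_null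
        intro i
        exact (prob_compl_eq_zero_iff (hSm ε (x i))).mpr (hxX i)
      have hXT : μ (X ∩ T) ≠ 0 := by
        intro h0
        apply hk
        have hsub' : X ⊆ (X ∩ T) ∪ Tᶜ := by
          intro z hz
          by_cases hzT : z ∈ T
          · exact Or.inl ⟨hz, hzT⟩
          · exact Or.inr hzT
        exact measure_mono_null hsub' (measure_union_null h0 hTc)
      obtain ⟨x', hx'⟩ := nonempty_of_measure_ne_zero hXT
      refine ⟨Fin.snoc x x', ?_, ?_⟩
      · intro i
        refine Fin.lastCases ?_ ?_ i
        · simpa [Fin.snoc_last] using hx'.1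
        · intro i; simpa [Fin.snoc_castSucc] using hxX i
      · intro i j hij
        have hx'T : ∀ i : Fin m, ε ≤ L (x i) x' := by
          intro i
          have := hx'.2
          rw [hT_def] at this
          exact Set.mem_iInter.mp this i
        rcases Fin.eq_castSucc_or_eq_last i with ⟨i', rfl⟩ | rfl
        · rcases Fin.eq_castSucc_or_eq_last j with ⟨j', rfl⟩ | rfl
          · rw [Fin.snoc_castSucc, Fin.snoc_castSucc]
            exact hxd i' j' (fun h => hij (by rw [h]))
          · rw [Fin.snoc_last, Fin.snoc_castSucc]
            exact hx'T i'
        · rcases Fin.eq_castSucc_or_eq_last j with ⟨j', rfl⟩ | rfl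
          · rw [Fin.snoc_last, Fin.snoc_castSucc, hLsymm]
            exact hx'T j'
          · exact absurd rfl hij
  obtain ⟨m, hm⟩ := exists_nat_gt (6 / ε)
  obtain ⟨x, hxX, hxd⟩ := key m
  -- eventually all pairwise distances are at least ε/2
  have hev : ∀ᶠ n in Filter.atTop, ∀ i j : Fin m, i ≠ j → ε / 2 ≤ d (x i) (x j) n := by
    rw [eventually_all]
    intro i
    rw [eventually_all]
    intro j
    by_cases hij : i = j
    · exact Filter.Eventually.of_forall fun n h => absurd hij h
    · have hbdd : Filter.atTop.IsBoundedUnder (· ≥ ·) (d (x i) (x j)) :=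
        ⟨0, Filter.eventually_map.mpr (Filter.Eventually.of_forall fun n => abs_nonneg _)⟩
      have hlt : ε / 2 < L (x i) (x j) :=
        lt_of_lt_of_le (half_lt_self hε) (hxd i j hij)
      exact (Filter.eventually_lt_of_lt_liminf hlt hbdd).mono fun n h _ => le_of_lt h
  obtain ⟨n, hn⟩ := hev.exists
  have hpig : (m : ℝ) * (ε / 2) ≤ 3 := by
    apply pigeon_aux (by positivity) (by linarith) (fun i => (f^[n] (x i) : ℝ))
    · exact fun i => (f^[n] (x i)).2
    · exact fun i j hij => hn i j hij
  have h6 : 6 < (m : ℝ) * ε := (div_lt_iff₀ hε).mp hm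
  linarith
end

section
/- A continuous piecewise monotone (multimodal) map f : [0,1] → [0,1] has no closed invariant scrambled set with more than one point. -/
/-!
A Li–Yorke pair `(x, f x)` yields approximate fixed points, hence a fixed point `p ∈ S`, and every
other point of `S` returns arbitrarily close to `p` without converging to it; in particular no
other point of `S` is mapped to `p`. Near `p` each side is repelling for the points of `S` (where
`f` increases: an orbit moving towards `p` would decrease monotonically to `p`) or crossing (where
`f` decreases), and passing to `f^[2]` when both are crossing leaves at most one crossing side.
Yet an orbit that keeps returning to `p` enters small balls around `p` by a step towards `p` from a
point near `p` which itself has a preimage near `p`: impossible on a repelling side, and on a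
crossing side that preimage would have to lie on the other, repelling, side.
-/

open Set Filter Topology Function

section Sequences

theorem frequently_atTop_and_not_succ {P : ℕ → Prop} (h : ∃ᶠ n in atTop, P n)
    (h' : ∃ᶠ n in atTop, ¬P n) : ∃ᶠ n in atTop, P n ∧ ¬P (n + 1) := by
  refine frequently_atTop.2 fun N => ?_
  obtain ⟨m, hm, hPm⟩ := frequently_atTop.1 h N
  by_contra! hstay
  obtain ⟨n, hn, hPn⟩ := frequently_atTop.1 h' m
  exact hPn (Nat.le_induction hPm (fun k hk hPk => hstay k (hm.trans hk) hPk) n hn)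

variable {α : Type*} {u : ℕ → α} {C D : Set α}

theorem frequently_two_mul_of_frequently (hCD : ∀ n, u n ∈ C → u n ∈ D ∧ u (n + 1) ∈ D)
    (h : ∃ᶠ n in atTop, u n ∈ C) : ∃ᶠ k in atTop, u (2 * k) ∈ D := by
  refine frequently_atTop.2 fun N => ?_
  obtain ⟨n, hn, hnC⟩ := frequently_atTop.1 h (2 * N)
  obtain ⟨k, rfl | rfl⟩ := Nat.even_or_odd' n
  · exact ⟨k, by omega, (hCD _ hnC).1⟩
  · exact ⟨k + 1, by omega, (hCD _ hnC).2⟩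

theorem eventually_of_eventually_two_mul (hCD : ∀ n, u n ∈ C → u n ∈ D ∧ u (n + 1) ∈ D)
    (h : ∀ᶠ k in atTop, u (2 * k) ∈ C) : ∀ᶠ n in atTop, u n ∈ D := by
  obtain ⟨N, hN⟩ := eventually_atTop.1 h
  refine eventually_atTop.2 ⟨2 * N, fun n hn => ?_⟩
  obtain ⟨k, rfl | rfl⟩ := Nat.even_or_odd' n
  · exact (hCD _ (hN k (by omega))).1
  · exact (hCD _ (hN k (by omega))).2

end Sequences

theorem Antitone.tendsto_of_mapClusterPt {ι α : Type*} [Preorder ι] [LinearOrder α]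
    [TopologicalSpace α] [OrderTopology α] {v : ι → α} {p : α} (hv : Antitone v)
    (hp : ∀ i, p ≤ v i) (hcl : MapClusterPt p atTop v) : Tendsto v atTop (𝓝 p) := by
  refine tendsto_order.2 ⟨fun a ha => .of_forall fun i => ha.trans_le (hp i), fun b hb => ?_⟩
  obtain ⟨i, hi⟩ := (hcl.frequently (Iio_mem_nhds hb)).exists
  exact (eventually_ge_atTop i).mono fun j hj => (hv hj).trans_lt hi

/-- For a fixed point `p` of `F`, this says that `(s, p)` is a Li–Yorke pair. -/
def ProximalNotAsymptotic {X : Type*} [TopologicalSpace X] (F : X → X) (p s : X) : Prop :=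
  MapClusterPt p atTop (fun n => F^[n] s) ∧ ¬Tendsto (fun n => F^[n] s) atTop (𝓝 p)

namespace ProximalNotAsymptotic

variable {X : Type*} [TopologicalSpace X] {F : X → X} {p s : X}

theorem apply_ne (hp : F p = p) (h : ProximalNotAsymptotic F p s) : F s ≠ p := fun hs =>
  h.2 <| tendsto_atTop_of_eventually_const (i₀ := 1) fun n hn => by
    obtain ⟨k, rfl⟩ := Nat.exists_eq_add_of_le' hn
    rw [iterate_succ_apply, hs, iterate_fixed hp]

theorem iterate_two {K : Set X} (hp : F p = p) (hc : ContinuousWithinAt F K p)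
    (horb : ∀ n, F^[n] s ∈ K) (h : ProximalNotAsymptotic F p s) :
    ProximalNotAsymptotic F^[2] p s := by
  have hstep : ∀ U ∈ 𝓝 p, ∃ V ∈ 𝓝 p, ∀ n, F^[n] s ∈ V → F^[n] s ∈ U ∧ F^[n + 1] s ∈ U := by
    intro U hU
    have hpre : ∀ᶠ t in 𝓝 p, t ∈ K → F t ∈ U :=
      eventually_nhdsWithin_iff.1 (hc.tendsto (hp.symm ▸ hU))
    refine ⟨U ∩ {t | t ∈ K → F t ∈ U}, inter_mem hU hpre, fun n hn => ⟨hn.1, ?_⟩⟩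
    rw [iterate_succ_apply']
    exact hn.2 (horb n)
  simp only [ProximalNotAsymptotic, ← iterate_mul]
  refine ⟨mapClusterPt_iff_frequently.2 fun U hU => ?_, fun ht => h.2 fun U hU => ?_⟩
  · obtain ⟨V, hV, hVU⟩ := hstep U hU
    exact frequently_two_mul_of_frequently hVU (mapClusterPt_iff_frequently.1 h.1 V hV)
  · obtain ⟨V, hV, hVU⟩ := hstep U hU
    exact eventually_of_eventually_two_mul hVU (ht hV)

end ProximalNotAsymptotic

section OrderTopology

variable {α : Type*} [LinearOrder α] [TopologicalSpace α] [OrderTopology α] {F : α → α} {p s : α}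

/-- If instead `F s ≤ s`, the orbit of `s` decreases inside `[p, s]`, so clustering at `p`
forces it to converge to `p`. -/
theorem lt_apply_of_proximalNotAsymptotic (hmono : MonotoneOn F (Icc p s)) (hp : F p = p)
    (hps : p < s) (hs : ProximalNotAsymptotic F p s) : s < F s := by
  by_contra! hFs
  have horb : ∀ n, F^[n] s ∈ Icc p s ∧ F^[n + 1] s ≤ F^[n] s := by
    intro n
    induction n with
    | zero => exact ⟨⟨hps.le, le_rfl⟩, hFs⟩
    | succ n ih =>
      have hpF : p ≤ F^[n + 1] s := by
        rw [iterate_succ_apply', ← hp]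
        exact hmono ⟨le_rfl, hps.le⟩ ih.1 ih.1.1
      have hmem : F^[n + 1] s ∈ Icc p s := ⟨hpF, ih.2.trans ih.1.2⟩
      refine ⟨hmem, ?_⟩
      simpa only [← iterate_succ_apply' F] using hmono hmem ih.1 ih.2
  exact hs.2 <| (antitone_nat_of_succ_le fun n => (horb n).2).tendsto_of_mapClusterPt
    (fun n => (horb n).1.1) hs.1

theorem apply_lt_of_proximalNotAsymptotic (hmono : MonotoneOn F (Icc s p)) (hp : F p = p)
    (hsp : s < p) (hs : ProximalNotAsymptotic F p s) : F s < s :=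
  lt_apply_of_proximalNotAsymptotic (α := αᵒᵈ)
    (fun _ ha _ hb hab => hmono ⟨hb.2, hb.1⟩ ⟨ha.2, ha.1⟩ hab) hp hsp hs

end OrderTopology

section Metric

variable {X : Type*} [MetricSpace X] {F : X → X} {K : Set X} {p : X}

theorem IsCompact.exists_fixed_of_forall_exists_dist_lt (hK : IsCompact K)
    (hF : ContinuousOn F K) (h : ∀ ε > 0, ∃ s ∈ K, dist (F s) s < ε) : ∃ p ∈ K, F p = p := by
  obtain ⟨s, hs, -⟩ := h 1 one_pos
  obtain ⟨p, hpK, hmin⟩ := hK.exists_isMinOn ⟨s, hs⟩ (f := fun s => dist (F s) s) (by fun_prop)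
  refine ⟨p, hpK, dist_le_zero.1 (not_lt.1 fun hpos => ?_)⟩
  obtain ⟨t, htK, hlt⟩ := h _ hpos
  exact hlt.not_ge (hmin htK)

theorem IsCompact.exists_pos_forall_dist_lt (hK : IsCompact K) (hF : ContinuousOn F K)
    (hfib : ∀ s ∈ K, F s = p → s = p) {δ : ℝ} (hδ : 0 < δ) :
    ∃ η > 0, ∀ s ∈ K, dist (F s) p < η → dist s p < δ := by
  rcases (K \ Metric.ball p δ).eq_empty_or_nonempty with hempty | hne
  · exact ⟨1, one_pos, fun s hs _ => sdiff_eq_empty.1 hempty hs⟩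
  have hdist : ContinuousOn (fun s => dist (F s) p) K := by fun_prop
  obtain ⟨q, hq, hmin⟩ :=
    (hK.diff Metric.isOpen_ball).exists_isMinOn hne (hdist.mono sdiff_subset)
  have hqp : q ≠ p := fun h => hq.2 (h ▸ Metric.mem_ball_self hδ)
  refine ⟨dist (F q) p, dist_pos.2 fun h => hqp (hfib q hq.1 h), fun s hs hlt => ?_⟩
  by_contra hfar
  exact hlt.not_ge (hmin ⟨hs, hfar⟩)

/-- Take for `F w` the last point of the orbit of `x` outside a small ball around `p` before the
orbit enters it; compactness and `F⁻¹{p} ∩ K = {p}` make `F w` and then `w` close to `p`. -/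
theorem exists_dist_apply_apply_lt (hK : IsCompact K) (hF : ContinuousOn F K)
    (hmaps : MapsTo F K K) (hp : F p = p)
    (hpna : ∀ s ∈ K, s ≠ p → ProximalNotAsymptotic F p s) {x : X} (hx : x ∈ K) (hxp : x ≠ p)
    {U : Set X} (hU : U ∈ 𝓝 p) :
    ∃ w ∈ K, w ∈ U ∧ F w ∈ U ∧ dist (F (F w)) p < dist (F w) p := by
  obtain ⟨δ, hδ, hball⟩ := Metric.mem_nhds_iff.1 hU
  have hfib : ∀ s ∈ K, F s = p → s = p := fun s hs hFs =>
    by_contra fun hsp => (hpna s hs hsp).apply_ne hp hFs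
  obtain ⟨η₁, hη₁, hw⟩ := hK.exists_pos_forall_dist_lt hF hfib hδ
  obtain ⟨η₂, hη₂, hu⟩ := hK.exists_pos_forall_dist_lt hF hfib (lt_min hδ hη₁)
  obtain ⟨hcl, hnt⟩ := hpna x hx hxp
  obtain ⟨V, hV, hfar⟩ := not_tendsto_iff_exists_frequently_notMem.1 hnt
  obtain ⟨ε, hε, hεV⟩ := Metric.mem_nhds_iff.1 hV
  set r := min η₂ ε
  have hr : 0 < r := lt_min hη₂ hε
  have hdrop : ∃ᶠ n in atTop, r ≤ dist (F^[n] x) p ∧ ¬r ≤ dist (F^[n + 1] x) p := by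
    refine frequently_atTop_and_not_succ (hfar.mono fun n hn => ?_) ?_
    · exact (min_le_right _ _).trans (not_lt.1 fun h => hn (hεV h))
    · exact (Metric.nhds_basis_ball.mapClusterPt_iff_frequently.1 hcl r hr).mono
        fun n hn => not_le.2 hn
  obtain ⟨n, hn, hr₁, hr₂⟩ := frequently_atTop.1 hdrop 1
  obtain ⟨k, rfl⟩ := Nat.exists_eq_add_of_le' hn
  rw [not_le, iterate_succ_apply', iterate_succ_apply'] at hr₂
  rw [iterate_succ_apply'] at hr₁
  have hwK : F^[k] x ∈ K := hmaps.iterate k hx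
  have hFw := hu _ (hmaps hwK) (hr₂.trans_le (min_le_left _ _))
  exact ⟨F^[k] x, hwK, hball (hw _ hwK (hFw.trans_le (min_le_right _ _))),
    hball (hFw.trans_le (min_le_left _ _)), hr₂.trans_le hr₁⟩

end Metric

section Real

variable {F : ℝ → ℝ} {K : Set ℝ} {p b b' : ℝ}

/-- On a repelling side `F` moves points away from `p`, and a point `F w` on a crossing side has no
preimage `w` near `p`: from its own side `w` would cross, on the other side it would be repelled. -/
theorem abs_apply_sub_le_of_sides (hp : F p = p)
    (hR : (∀ s ∈ K ∩ Ioc p b, s < F s) ∨ ∀ s ∈ K ∩ Ioc p b, F s < p)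
    (hL : (∀ s ∈ K ∩ Ico b' p, F s < s) ∨ ∀ s ∈ K ∩ Ico b' p, p < F s)
    (hRL : (∀ s ∈ K ∩ Ioc p b, s < F s) ∨ ∀ s ∈ K ∩ Ico b' p, F s < s)
    {w : ℝ} (hw : w ∈ K ∩ Ioo b' b) (hFw : F w ∈ K ∩ Ioo b' b) :
    |F w - p| ≤ |F (F w) - p| := by
  have hwR : p < w → w ∈ K ∩ Ioc p b := fun h => ⟨hw.1, h, hw.2.2.le⟩
  have hwL : w < p → w ∈ K ∩ Ico b' p := fun h => ⟨hw.1, hw.2.1.le, h⟩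
  have huR : p < F w → F w ∈ K ∩ Ioc p b := fun h => ⟨hFw.1, h, hFw.2.2.le⟩
  have huL : F w < p → F w ∈ K ∩ Ico b' p := fun h => ⟨hFw.1, hFw.2.1.le, h⟩
  have hwp : F w ≠ p → w ≠ p := fun h hw => h (hw ▸ hp)
  rcases lt_trichotomy (F w) p with hu | hu | hu
  · have hrep : F (F w) < F w := by
      rcases hRL with hRrep | hLrep
      · rcases hL with hLrep | hLcross
        · exact hLrep _ (huL hu)
        · rcases lt_or_gt_of_ne (hwp hu.ne) with h | h
          · linarith [hLcross _ (hwL h)]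
          · linarith [hRrep _ (hwR h)]
      · exact hLrep _ (huL hu)
    rw [abs_of_neg (by linarith), abs_of_neg (by linarith)]
    linarith
  · simp [hu, hp]
  · have hrep : F w < F (F w) := by
      rcases hRL with hRrep | hLrep
      · exact hRrep _ (huR hu)
      · rcases hR with hRrep | hRcross
        · exact hRrep _ (huR hu)
        · rcases lt_or_gt_of_ne (hwp hu.ne') with h | h
          · linarith [hLrep _ (hwL h)]
          · linarith [hRcross _ (hwR h)]
    rw [abs_of_pos (by linarith), abs_of_pos (by linarith)]
    linarith

theorem subset_singleton_of_sides (hK : IsCompact K) (hF : ContinuousOn F K)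
    (hmaps : MapsTo F K K) (hp : F p = p)
    (hpna : ∀ s ∈ K, s ≠ p → ProximalNotAsymptotic F p s) (hb' : b' < p) (hb : p < b)
    (hR : (∀ s ∈ K ∩ Ioc p b, s < F s) ∨ ∀ s ∈ K ∩ Ioc p b, F s < p)
    (hL : (∀ s ∈ K ∩ Ico b' p, F s < s) ∨ ∀ s ∈ K ∩ Ico b' p, p < F s)
    (hRL : (∀ s ∈ K ∩ Ioc p b, s < F s) ∨ ∀ s ∈ K ∩ Ico b' p, F s < s) : K ⊆ {p} := by
  intro x hx
  by_contra hxp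
  obtain ⟨w, hwK, hw, hFw, hlt⟩ :=
    exists_dist_apply_apply_lt hK hF hmaps hp hpna hx hxp (Ioo_mem_nhds hb' hb)
  rw [Real.dist_eq, Real.dist_eq] at hlt
  exact hlt.not_ge (abs_apply_sub_le_of_sides hp hR hL hRL ⟨hwK, hw⟩ ⟨hmaps hwK, hFw⟩)

end Real

theorem Fin.exists_mem_Ico_of_monotone {α : Type*} [LinearOrder α] {m : ℕ}
    {a : Fin (m + 1) → α} (ha : Monotone a) {x : α} (hx : x ∈ Ico (a 0) (a (Fin.last m))) :
    ∃ i : Fin m, x ∈ Ico (a i.castSucc) (a i.succ) := by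
  induction m with
  | zero => exact (lt_irrefl (a 0) (hx.1.trans_lt hx.2)).elim
  | succ m ih =>
    by_cases h : x < a (Fin.last m).castSucc
    · obtain ⟨i, hi⟩ := ih (a := a ∘ Fin.castSucc) (ha.comp Fin.strictMono_castSucc.monotone)
        ⟨hx.1, h⟩
      refine ⟨i.castSucc, ?_⟩
      rwa [Fin.succ_castSucc]
    · refine ⟨Fin.last m, not_lt.1 h, ?_⟩
      rw [Fin.succ_last]
      exact hx.2

theorem Fin.exists_mem_Ioc_of_monotone {α : Type*} [LinearOrder α] {m : ℕ}
    {a : Fin (m + 1) → α} (ha : Monotone a) {x : α} (hx : x ∈ Ioc (a 0) (a (Fin.last m))) :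
    ∃ i : Fin m, x ∈ Ioc (a i.castSucc) (a i.succ) := by
  obtain ⟨i, hi⟩ := Fin.exists_mem_Ico_of_monotone (α := αᵒᵈ)
    (a := fun j => OrderDual.toDual (a j.rev))
    (fun j k hjk => OrderDual.toDual_le_toDual.2 (ha (Fin.rev_le_rev.2 hjk)))
    (x := OrderDual.toDual x) ⟨by simpa using hx.2, by simpa using hx.1⟩
  refine ⟨i.rev, ?_⟩
  simpa [Fin.rev_castSucc, Fin.rev_succ] using And.intro hi.2 hi.1

section UnitInterval

variable {F : ℝ → ℝ} {K : Set ℝ} {p b b' : ℝ}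

theorem forall_lt_apply_of_monotoneOn (hK : K ⊆ Icc 0 1) (hpI : p ∈ Icc (0 : ℝ) 1)
    (hp : F p = p) (hpna : ∀ s ∈ K, s ≠ p → ProximalNotAsymptotic F p s)
    (hmono : MonotoneOn F (Icc p b ∩ Icc 0 1)) : ∀ s ∈ K ∩ Ioc p b, s < F s :=
  fun s ⟨hsK, hs⟩ => lt_apply_of_proximalNotAsymptotic
    (hmono.mono fun _ ht => ⟨⟨ht.1, ht.2.trans hs.2⟩, Icc_subset_Icc hpI.1 (hK hsK).2 ht⟩)
    hp hs.1 (hpna s hsK hs.1.ne')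

theorem forall_apply_lt_of_monotoneOn (hK : K ⊆ Icc 0 1) (hpI : p ∈ Icc (0 : ℝ) 1)
    (hp : F p = p) (hpna : ∀ s ∈ K, s ≠ p → ProximalNotAsymptotic F p s)
    (hmono : MonotoneOn F (Icc b p ∩ Icc 0 1)) : ∀ s ∈ K ∩ Ico b p, F s < s :=
  fun s ⟨hsK, hs⟩ => apply_lt_of_proximalNotAsymptotic
    (hmono.mono fun _ ht => ⟨⟨hs.1.trans ht.1, ht.2⟩, Icc_subset_Icc (hK hsK).1 hpI.2 ht⟩)
    hp hs.2 (hpna s hsK hs.2.ne)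

theorem forall_apply_lt_of_strictAntiOn (hK : K ⊆ Icc 0 1) (hpI : p ∈ Icc (0 : ℝ) 1)
    (hp : F p = p) (hanti : StrictAntiOn F (Icc p b ∩ Icc 0 1)) :
    ∀ s ∈ K ∩ Ioc p b, F s < p :=
  fun _ ⟨hsK, hs⟩ => hp ▸ hanti ⟨⟨le_rfl, hs.1.le.trans hs.2⟩, hpI⟩ ⟨⟨hs.1.le, hs.2⟩, hK hsK⟩ hs.1

theorem forall_lt_apply_of_strictAntiOn (hK : K ⊆ Icc 0 1) (hpI : p ∈ Icc (0 : ℝ) 1)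
    (hp : F p = p) (hanti : StrictAntiOn F (Icc b p ∩ Icc 0 1)) :
    ∀ s ∈ K ∩ Ico b p, p < F s :=
  fun _ ⟨hsK, hs⟩ => hp ▸ hanti ⟨⟨hs.1, hs.2.le⟩, hK hsK⟩ ⟨⟨hs.1.trans hs.2.le, le_rfl⟩, hpI⟩ hs.2

theorem exists_laps_of_multimodal
    (hmm : ∃ (m : ℕ) (a : Fin (m + 1) → ℝ), StrictMono a ∧ a 0 = 0 ∧ a (Fin.last m) = 1 ∧
      ∀ i : Fin m, StrictMonoOn F (Icc (a i.castSucc) (a i.succ)) ∨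
        StrictAntiOn F (Icc (a i.castSucc) (a i.succ)))
    (hp : p ∈ Icc (0 : ℝ) 1) :
    ∃ b' < p, ∃ b > p,
      (StrictMonoOn F (Icc b' p ∩ Icc 0 1) ∨ StrictAntiOn F (Icc b' p ∩ Icc 0 1)) ∧
      (StrictMonoOn F (Icc p b ∩ Icc 0 1) ∨ StrictAntiOn F (Icc p b ∩ Icc 0 1)) := by
  obtain ⟨m, a, ha, h0, h1, hlap⟩ := hmm
  have hlap' : ∀ i : Fin m, ∀ J ⊆ Icc (a i.castSucc) (a i.succ),
      StrictMonoOn F J ∨ StrictAntiOn F J := fun i J hJ => (hlap i).imp (·.mono hJ) (·.mono hJ)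
  have hpoint : ∀ J ⊆ ({p} : Set ℝ), StrictMonoOn F J ∨ StrictAntiOn F J :=
    fun J hJ => Or.inl ((subsingleton_singleton.anti hJ).strictMonoOn F)
  obtain ⟨b', hb', hL⟩ : ∃ b' < p,
      StrictMonoOn F (Icc b' p ∩ Icc 0 1) ∨ StrictAntiOn F (Icc b' p ∩ Icc 0 1) := by
    rcases hp.1.eq_or_lt with h | hp0
    · exact ⟨-1, by linarith, hpoint _ fun t ht => le_antisymm ht.1.2 (h ▸ ht.2.1)⟩
    obtain ⟨i, hi⟩ := Fin.exists_mem_Ioc_of_monotone ha.monotone (x := p) (h0 ▸ h1 ▸ ⟨hp0, hp.2⟩)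
    exact ⟨a i.castSucc, hi.1, hlap' i _ fun t ht => ⟨ht.1.1, ht.1.2.trans hi.2⟩⟩
  obtain ⟨b, hb, hR⟩ : ∃ b > p,
      StrictMonoOn F (Icc p b ∩ Icc 0 1) ∨ StrictAntiOn F (Icc p b ∩ Icc 0 1) := by
    rcases hp.2.eq_or_lt with h | hp1
    · exact ⟨2, by linarith, hpoint _ fun t ht => le_antisymm (h ▸ ht.2.2) ht.1.1⟩
    obtain ⟨i, hi⟩ := Fin.exists_mem_Ico_of_monotone ha.monotone (x := p) (h0 ▸ h1 ▸ ⟨hp.1, hp1⟩)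
    exact ⟨a i.succ, hi.2, hlap' i _ fun t ht => ⟨hi.1.trans ht.1.1, ht.1.2⟩⟩
  exact ⟨b', hb', b, hb, hL, hR⟩

/-- By continuity, `F` maps each side of `p` near `p` into the lap on the other side. -/
theorem exists_monotoneOn_iterate_two (hmaps : MapsTo F (Icc 0 1) (Icc 0 1))
    (hc : ContinuousWithinAt F (Icc 0 1) p) (hpI : p ∈ Icc (0 : ℝ) 1) (hp : F p = p)
    (hb' : b' < p) (hb : p < b)
    (hL : AntitoneOn F (Icc b' p ∩ Icc 0 1)) (hR : AntitoneOn F (Icc p b ∩ Icc 0 1)) :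
    ∃ c' < p, ∃ c > p,
      MonotoneOn F^[2] (Icc c' p ∩ Icc 0 1) ∧ MonotoneOn F^[2] (Icc p c ∩ Icc 0 1) := by
  obtain ⟨ε, hε, hnear⟩ := Metric.eventually_nhds_iff_ball.1 <| eventually_nhdsWithin_iff.1 <|
    hc.tendsto.eventually (Ioo_mem_nhds (hp.symm ▸ hb') (hp.symm ▸ hb))
  have hball : ∀ t ∈ Icc (p - ε / 2) (p + ε / 2), t ∈ Metric.ball p ε := fun t ht => by
    rw [Metric.mem_ball, Real.dist_eq, abs_lt]
    constructor <;> linarith [ht.1, ht.2]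
  set c' := max b' (p - ε / 2)
  set c := min b (p + ε / 2)
  have hsubL : Icc c' p ∩ Icc 0 1 ⊆ Icc b' p ∩ Icc 0 1 :=
    inter_subset_inter_left _ (Icc_subset_Icc_left (le_max_left _ _))
  have hsubR : Icc p c ∩ Icc 0 1 ⊆ Icc p b ∩ Icc 0 1 :=
    inter_subset_inter_left _ (Icc_subset_Icc_right (min_le_left _ _))
  have hmapsL : MapsTo F (Icc c' p ∩ Icc 0 1) (Icc p b ∩ Icc 0 1) := fun t ht =>
    ⟨⟨hp ▸ hL (hsubL ht) ⟨⟨hb'.le, le_rfl⟩, hpI⟩ ht.1.2,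
      (hnear t (hball t ⟨(le_max_right _ _).trans ht.1.1, by linarith [ht.1.2]⟩) ht.2).2.le⟩,
      hmaps ht.2⟩
  have hmapsR : MapsTo F (Icc p c ∩ Icc 0 1) (Icc b' p ∩ Icc 0 1) := fun t ht =>
    ⟨⟨(hnear t (hball t ⟨by linarith [ht.1.1], ht.1.2.trans (min_le_right _ _)⟩) ht.2).1.le,
      hp ▸ hR ⟨⟨le_rfl, hb.le⟩, hpI⟩ (hsubR ht) ht.1.1⟩, hmaps ht.2⟩
  exact ⟨c', max_lt hb' (by linarith), c, lt_min hb (by linarith),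
    hR.comp (hL.mono hsubL) hmapsL, hL.comp (hR.mono hsubR) hmapsR⟩

end UnitInterval

theorem proximalNotAsymptotic_of_liminf_limsup {F : ℝ → ℝ} {p s C : ℝ} (hp : F p = p)
    (hC : ∀ n, |F^[n] s - F^[n] p| ≤ C)
    (h : liminf (fun n => |F^[n] s - F^[n] p|) atTop = 0 ∧
      0 < limsup (fun n => |F^[n] s - F^[n] p|) atTop) :
    ProximalNotAsymptotic F p s := by
  simp only [iterate_fixed hp] at hC h
  refine ⟨Metric.nhds_basis_ball.mapClusterPt_iff_frequently.2 fun ε hε => ?_, fun ht => ?_⟩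
  · exact frequently_lt_of_liminf_lt (isCoboundedUnder_ge_of_le _ hC) (h.1 ▸ hε)
  · have h0 := (tendsto_iff_norm_sub_tendsto_zero.1 ht).limsup_eq
    simp only [Real.norm_eq_abs] at h0
    exact h.2.ne' h0

theorem subset_singleton_of_multimodal {f : ℝ → ℝ} (hf : ContinuousOn f (Icc 0 1))
    (hmaps : MapsTo f (Icc 0 1) (Icc 0 1))
    (hmm : ∃ (m : ℕ) (a : Fin (m + 1) → ℝ), StrictMono a ∧ a 0 = 0 ∧ a (Fin.last m) = 1 ∧
      ∀ i : Fin m, StrictMonoOn f (Icc (a i.castSucc) (a i.succ)) ∨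
        StrictAntiOn f (Icc (a i.castSucc) (a i.succ)))
    {K : Set ℝ} (hKI : K ⊆ Icc 0 1) (hK : IsCompact K) (hM : MapsTo f K K) {p : ℝ}
    (hpK : p ∈ K) (hp : f p = p) (hpna : ∀ s ∈ K, s ≠ p → ProximalNotAsymptotic f p s) :
    K ⊆ {p} := by
  have hpI := hKI hpK
  have hfK : ContinuousOn f K := hf.mono hKI
  obtain ⟨b', hb', b, hb, hL, hR⟩ := exists_laps_of_multimodal hmm hpI
  rcases hR with hRmono | hRanti
  · have hRrep := forall_lt_apply_of_monotoneOn hKI hpI hp hpna hRmono.monotoneOn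
    refine subset_singleton_of_sides hK hfK hM hp hpna hb' hb (.inl hRrep) ?_ (.inl hRrep)
    exact hL.imp (fun h => forall_apply_lt_of_monotoneOn hKI hpI hp hpna h.monotoneOn)
      (forall_lt_apply_of_strictAntiOn hKI hpI hp)
  rcases hL with hLmono | hLanti
  · have hLrep := forall_apply_lt_of_monotoneOn hKI hpI hp hpna hLmono.monotoneOn
    exact subset_singleton_of_sides hK hfK hM hp hpna hb' hb
      (.inr (forall_apply_lt_of_strictAntiOn hKI hpI hp hRanti)) (.inl hLrep) (.inr hLrep)
  -- `f` reverses orientation on both sides of `p`, so pass to `f^[2]`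
  obtain ⟨c', hc', c, hc, hL₂, hR₂⟩ := exists_monotoneOn_iterate_two hmaps (hf p hpI) hpI hp hb'
    hb hLanti.antitoneOn hRanti.antitoneOn
  have hp₂ : f^[2] p = p := iterate_fixed hp 2
  have hpna₂ (s : ℝ) (hs : s ∈ K) (hsp : s ≠ p) : ProximalNotAsymptotic f^[2] p s :=
    (hpna s hs hsp).iterate_two hp (hfK p hpK) fun n => hM.iterate n hs
  have hRrep := forall_lt_apply_of_monotoneOn hKI hpI hp₂ hpna₂ hR₂
  exact subset_singleton_of_sides hK (hfK.iterate hM 2) (hM.iterate 2) hp₂ hpna₂ hc' hc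
    (.inl hRrep) (.inl (forall_apply_lt_of_monotoneOn hKI hpI hp₂ hpna₂ hL₂)) (.inl hRrep)

/-- A continuous multimodal (piecewise strictly monotone) map of `[0,1]` has no closed
invariant scrambled set with more than one point. -/
theorem multimodal_no_closed_invariant_scrambled_set
    (f : ℝ → ℝ) (hf : ContinuousOn f (Set.Icc 0 1))
    (hmaps : Set.MapsTo f (Set.Icc 0 1) (Set.Icc 0 1))
    (hmm : ∃ (m : ℕ) (a : Fin (m + 1) → ℝ), StrictMono a ∧ a 0 = 0 ∧ a (Fin.last m) = 1 ∧
      ∀ i : Fin m, StrictMonoOn f (Set.Icc (a i.castSucc) (a i.succ)) ∨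
        StrictAntiOn f (Set.Icc (a i.castSucc) (a i.succ)))
    (S : Set ℝ) (hS : S ⊆ Set.Icc 0 1) (hSclosed : IsClosed S) (hSinv : f '' S ⊆ S)
    (hscr : ∀ x ∈ S, ∀ y ∈ S, x ≠ y →
      Filter.atTop.liminf (fun n : ℕ => |f^[n] x - f^[n] y|) = 0 ∧
      0 < Filter.atTop.limsup (fun n : ℕ => |f^[n] x - f^[n] y|)) :
    S.Subsingleton := by
  have hK : IsCompact S := isCompact_Icc.of_isClosed_subset hSclosed hS
  have hM : MapsTo f S S := fun s hs => hSinv (mem_image_of_mem f hs)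
  have hbdd (x : ℝ) (hx : x ∈ S) (y : ℝ) (hy : y ∈ S) (n : ℕ) : |f^[n] x - f^[n] y| ≤ 1 :=
    Real.dist_le_of_mem_Icc_01 (hS (hM.iterate n hx)) (hS (hM.iterate n hy))
  intro x₀ hx₀ y₀ hy₀
  obtain ⟨p, hpS, hp⟩ : ∃ p ∈ S, f p = p := by
    by_cases hfix : f x₀ = x₀
    · exact ⟨x₀, hx₀, hfix⟩
    refine hK.exists_fixed_of_forall_exists_dist_lt (hf.mono hS) fun ε hε => ?_
    obtain ⟨n, hn⟩ := (frequently_lt_of_liminf_lt (isCoboundedUnder_ge_of_le _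
      (hbdd x₀ hx₀ _ (hM hx₀))) ((hscr x₀ hx₀ _ (hM hx₀) (Ne.symm hfix)).1 ▸ hε)).exists
    refine ⟨f^[n] x₀, hM.iterate n hx₀, ?_⟩
    rwa [Real.dist_eq, abs_sub_comm, ← iterate_succ_apply' f, iterate_succ_apply]
  have hsub := subset_singleton_of_multimodal hf hmaps hmm hS hK hM hpS hp fun s hs hsp =>
    proximalNotAsymptotic_of_liminf_limsup hp (hbdd s hs p hpS) (hscr s hs p hpS hsp)
  exact (hsub hx₀).trans (hsub hy₀).symm
end

section
/- If f : I → I is a continuous map of a compact interval and x, y are both approximately periodic points, then the pair (x, y) is either asymptotic or distal; i.e., it is not a Li–Yorke pair. -/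
/-!
If the pair is not distal, the two orbits come `δ`-close at arbitrarily late times `n₀`, and by
uniform continuity of the first `M` iterates they then stay `ε/5`-close for a whole common period
`M` of periodic points `p`, `q` whose orbits `ε/5`-shadow those of `x` and `y`. Across that window
the orbits of `p` and `q` are `3ε/5`-close; their distance is `M`-periodic, so they stay that close
forever, and shadowing once more makes the orbits of `x` and `y` `ε`-close from `n₀` on.
-/

open Set Filter

open Function Metric Topology

variable {α : Type*} [PseudoMetricSpace α] {f : α → α}

def IsApproxPeriodicPt (f : α → α) (x : α) : Prop :=
  ∀ ε > 0, ∃ p, (∃ m, 0 < m ∧ IsPeriodicPt f m p) ∧ ∀ᶠ n in atTop, dist (f^[n] x) (f^[n] p) < ε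

lemma isBoundedUnder_le_dist [BoundedSpace α] (u v : ℕ → α) :
    IsBoundedUnder (· ≤ ·) atTop fun n => dist (u n) (v n) :=
  isBoundedUnder_of ⟨diam (univ : Set α), fun _ =>
    dist_le_diam_of_mem (Bornology.isBounded_univ.2 inferInstance) trivial trivial⟩

lemma isApproxPeriodicPt_of_limsup_lt [BoundedSpace α] {x : α}
    (h : ∀ ε > 0, ∃ p, (∃ m, 0 < m ∧ IsPeriodicPt f m p) ∧
      limsup (fun n => dist (f^[n] x) (f^[n] p)) atTop < ε) :
    IsApproxPeriodicPt f x := fun ε hε =>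
  (h ε hε).imp fun _ ⟨hp, hlt⟩ => ⟨hp, eventually_lt_of_limsup_lt hlt (isBoundedUnder_le_dist _ _)⟩

lemma UniformContinuous.exists_forall_dist_iterate_lt (hf : UniformContinuous f) {ε : ℝ}
    (hε : 0 < ε) (k : ℕ) :
    ∃ δ > 0, ∀ s t, dist s t < δ → ∀ i < k, dist (f^[i] s) (f^[i] t) < ε := by
  induction k with
  | zero => exact ⟨1, one_pos, fun _ _ _ _ hi => absurd hi (Nat.not_lt_zero _)⟩
  | succ k ih =>
    obtain ⟨δ, hδ, hlt⟩ := ih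
    obtain ⟨η, hη, hk⟩ := uniformContinuous_iff.1 (hf.iterate f k) ε hε
    refine ⟨min δ η, lt_min hδ hη, fun s t hst i hi => ?_⟩
    rcases Nat.lt_succ_iff_lt_or_eq.1 hi with hi | rfl
    · exact hlt s t (hst.trans_le (min_le_left _ _)) i hi
    · exact hk (hst.trans_le (min_le_right _ _))

lemma Function.IsPeriodicPt.dist_iterate_lt {M : ℕ} {p q : α} (hp : IsPeriodicPt f M p)
    (hq : IsPeriodicPt f M q) (hM : 0 < M) {r : ℝ} (h : ∀ i < M, dist (f^[i] p) (f^[i] q) < r)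
    (n : ℕ) : dist (f^[n] p) (f^[n] q) < r := by
  rw [← hp.iterate_mod_apply, ← hq.iterate_mod_apply]
  exact h _ (Nat.mod_lt n hM)

lemma IsApproxPeriodicPt.eventually_dist_iterate_lt (hf : UniformContinuous f) {x y : α}
    (hx : IsApproxPeriodicPt f x) (hy : IsApproxPeriodicPt f y)
    (hxy : ∀ δ > 0, ∃ᶠ n in atTop, dist (f^[n] x) (f^[n] y) < δ) {ε : ℝ} (hε : 0 < ε) :
    ∀ᶠ n in atTop, dist (f^[n] x) (f^[n] y) < ε := by
  obtain ⟨p, ⟨m₁, hm₁, hp⟩, hxp⟩ := hx (ε / 5) (by positivity)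
  obtain ⟨q, ⟨m₂, hm₂, hq⟩, hyq⟩ := hy (ε / 5) (by positivity)
  obtain ⟨N, hN⟩ := eventually_atTop.1 (hxp.and hyq)
  obtain ⟨δ, hδ, hclose⟩ := hf.exists_forall_dist_iterate_lt (ε := ε / 5) (by positivity) (m₁ * m₂)
  obtain ⟨n₀, hn₀N, hn₀⟩ := frequently_atTop.1 (hxy δ hδ) N
  have hM : 0 < m₁ * m₂ := Nat.mul_pos hm₁ hm₂
  have hpM : IsPeriodicPt f (m₁ * m₂) (f^[n₀] p) := (hp.mul_const m₂).apply_iterate n₀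
  have hqM : IsPeriodicPt f (m₁ * m₂) (f^[n₀] q) := (hq.const_mul m₁).apply_iterate n₀
  have hpq : ∀ i, dist (f^[i] (f^[n₀] p)) (f^[i] (f^[n₀] q)) < 3 * (ε / 5) := by
    refine hpM.dist_iterate_lt hqM hM fun i hi => ?_
    obtain ⟨hxp, hyq⟩ := hN (i + n₀) (by omega)
    have hxy := hclose _ _ hn₀ i hi
    simp only [← iterate_add_apply] at hxy ⊢
    linarith [dist_triangle4 (f^[i + n₀] p) (f^[i + n₀] x) (f^[i + n₀] y) (f^[i + n₀] q),
      dist_comm (f^[i + n₀] p) (f^[i + n₀] x)]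
  refine eventually_atTop.2 ⟨n₀, fun n hn => ?_⟩
  obtain ⟨i, rfl⟩ := Nat.exists_eq_add_of_le' hn
  obtain ⟨hxp, hyq⟩ := hN (i + n₀) (by omega)
  have hpqi := hpq i
  simp only [← iterate_add_apply] at hpqi
  linarith [dist_triangle4 (f^[i + n₀] x) (f^[i + n₀] p) (f^[i + n₀] q) (f^[i + n₀] y),
    dist_comm (f^[i + n₀] y) (f^[i + n₀] q)]

theorem IsApproxPeriodicPt.tendsto_dist_or_liminf_pos [CompactSpace α] (hf : Continuous f)
    {x y : α} (hx : IsApproxPeriodicPt f x) (hy : IsApproxPeriodicPt f y) :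
    Tendsto (fun n => dist (f^[n] x) (f^[n] y)) atTop (𝓝 0) ∨
      0 < liminf (fun n => dist (f^[n] x) (f^[n] y)) atTop := by
  refine or_iff_not_imp_right.2 fun hd => ?_
  have hxy : ∀ δ > 0, ∃ᶠ n in atTop, dist (f^[n] x) (f^[n] y) < δ := fun δ hδ =>
    frequently_lt_of_liminf_lt (isBoundedUnder_le_dist _ _).isCoboundedUnder_ge
      ((not_lt.1 hd).trans_lt hδ)
  exact tendsto_order.2 ⟨fun _ ha => .of_forall fun _ => ha.trans_le dist_nonneg,
    fun _ hε => hx.eventually_dist_iterate_lt (CompactSpace.uniformContinuous_of_continuous hf)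
      hy hxy hε⟩

theorem approx_periodic_pair_asymptotic_or_distal_general
    {a b : ℝ}
    (f : Set.Icc a b → Set.Icc a b) (hf : Continuous f)
    (x y : Set.Icc a b)
    (hx : ∀ ε > (0:ℝ), ∃ p : Set.Icc a b, (∃ m : ℕ, 1 ≤ m ∧ f^[m] p = p) ∧
      Filter.atTop.limsup (fun n : ℕ => |(f^[n] x : ℝ) - (f^[n] p : ℝ)|) < ε)
    (hy : ∀ ε > (0:ℝ), ∃ p : Set.Icc a b, (∃ m : ℕ, 1 ≤ m ∧ f^[m] p = p) ∧
      Filter.atTop.limsup (fun n : ℕ => |(f^[n] y : ℝ) - (f^[n] p : ℝ)|) < ε) :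
    Filter.Tendsto (fun n : ℕ => |(f^[n] x : ℝ) - (f^[n] y : ℝ)|) Filter.atTop (nhds 0) ∨
    0 < Filter.atTop.liminf (fun n : ℕ => |(f^[n] x : ℝ) - (f^[n] y : ℝ)|) := by
  simpa only [Subtype.dist_eq, Real.dist_eq] using
    (isApproxPeriodicPt_of_limsup_lt hx).tendsto_dist_or_liminf_pos hf
      (isApproxPeriodicPt_of_limsup_lt hy)

/-- If `x` and `y` are approximately periodic points of a continuous map of a compact
interval, then the pair `(x,y)` is either asymptotic or distal (hence not Li-Yorke). -/
theorem approx_periodic_pair_asymptotic_or_distal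
    {a b : ℝ} (hab : a ≤ b)
    (f : Set.Icc a b → Set.Icc a b) (hf : Continuous f)
    (x y : Set.Icc a b)
    (hx : ∀ ε > (0:ℝ), ∃ p : Set.Icc a b, (∃ m : ℕ, 1 ≤ m ∧ f^[m] p = p) ∧
      Filter.atTop.limsup (fun n : ℕ => |(f^[n] x : ℝ) - (f^[n] p : ℝ)|) < ε)
    (hy : ∀ ε > (0:ℝ), ∃ p : Set.Icc a b, (∃ m : ℕ, 1 ≤ m ∧ f^[m] p = p) ∧
      Filter.atTop.limsup (fun n : ℕ => |(f^[n] y : ℝ) - (f^[n] p : ℝ)|) < ε) :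
    Filter.Tendsto (fun n : ℕ => |(f^[n] x : ℝ) - (f^[n] y : ℝ)|) Filter.atTop (nhds 0) ∨
    0 < Filter.atTop.liminf (fun n : ℕ => |(f^[n] x : ℝ) - (f^[n] y : ℝ)|) :=
  approx_periodic_pair_asymptotic_or_distal_general f hf x y hx hy
end

section
/- Let f : I → I be continuous, topologically mixing in the sense that limsup_n λ(f^n(A)) = 1 for every measurable A of positive Lebesgue measure (limsup fullness). Then for every x ∈ I there is a full Lebesgue measure set C_x ⊂ I such that for all y ∈ C_x: liminf_n |f^n(y) − f^n(x)| = 0 and limsup_n |f^n(y) − f^n(x)| ≥ diam(I)/2. -/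
/-!
If a set `A ⊆ [0,1]` of positive measure had all its orbits within distance `r < 1/2` of the
orbit of `x` from time `N` on, then for `n ≥ N` the image `fⁿ(A)` would lie in an interval of
length `2r`; if they all stayed at distance `≥ ε`, then `fⁿ(A)` would miss a subinterval of
`[0,1]` of length `min ε 1` next to `fⁿ(x)`. Either way `limsup λ(fⁿ(A)) < 1`, so such sets are
null (continuity of `f` makes them closed, hence measurable). Removing the countably many null
sets with `r = 1/2 - 1/(k+1)` and `ε = 1/(k+1)` from `[0,1]` leaves `C_x`.
-/

open MeasureTheory Set Filter Metric Topology
open scoped ENNReal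

theorem measure_eq_zero_of_eventually_mapsTo_of_measure_lt_one {α : Type*} [MeasurableSpace α]
    {μ : Measure α} {T : ℕ → α → α} {s A : Set α}
    (hfull : ∀ A ⊆ s, MeasurableSet A → 0 < μ A → atTop.limsup (fun n ↦ μ (T n '' A)) = 1)
    (hAs : A ⊆ s) (hA : MeasurableSet A) {K : ℕ → Set α} {c : ℝ≥0∞} (hc : c < 1)
    (hK : ∀ n, μ (K n) ≤ c) (hAK : ∀ᶠ n in atTop, MapsTo (T n) A (K n)) : μ A = 0 := by
  by_contra hA0
  have hlimsup : atTop.limsup (fun n ↦ μ (T n '' A)) ≤ c :=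
    limsup_le_of_le (by isBoundedDefault) <|
      hAK.mono fun n hn ↦ (measure_mono hn.image_subset).trans (hK n)
  rw [hfull A hAs hA (pos_iff_ne_zero.2 hA0)] at hlimsup
  exact hc.not_ge hlimsup

theorem isClosed_setOf_forall_ge_mem {X Y : Type*} [TopologicalSpace X] [TopologicalSpace Y]
    {s : Set X} (hs : IsClosed s) {φ : ℕ → X → Y} (hφ : ∀ n, ContinuousOn (φ n) s)
    {K : ℕ → Set Y} (hK : ∀ n, IsClosed (K n)) (N : ℕ) :
    IsClosed {y ∈ s | ∀ n ≥ N, φ n y ∈ K n} := by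
  have hset : {y ∈ s | ∀ n ≥ N, φ n y ∈ K n} = s ∩ ⋂ n ≥ N, s ∩ φ n ⁻¹' K n := by
    ext y; simp +contextual [iff_def]
  rw [hset]
  exact hs.inter <| isClosed_biInter fun n _ ↦ (hφ n).preimage_isClosed_of_isClosed hs (hK n)

theorem volume_Icc_zero_one_inter_ball_ge {z ε : ℝ} (hz : z ∈ Icc (0 : ℝ) 1) (hε : 0 ≤ ε) :
    ENNReal.ofReal (min ε 1) ≤ volume (Icc 0 1 ∩ ball z ε) := by
  have hsub : Ioo (max 0 (z - ε)) (min 1 (z + ε)) ⊆ Icc 0 1 ∩ ball z ε := by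
    intro w ⟨hw₁, hw₂⟩
    rw [max_lt_iff] at hw₁
    rw [lt_min_iff] at hw₂
    exact ⟨⟨hw₁.1.le, hw₂.1.le⟩, by rw [Real.ball_eq_Ioo]; exact ⟨hw₁.2, hw₂.2⟩⟩
  refine le_trans ?_ (measure_mono hsub)
  rw [Real.volume_Ioo]
  refine ENNReal.ofReal_le_ofReal ?_
  obtain ⟨hz₀, hz₁⟩ := hz
  simp only [min_def, max_def]
  split_ifs <;> linarith

theorem volume_Icc_zero_one_diff_ball_le {z ε : ℝ} (hz : z ∈ Icc (0 : ℝ) 1) (hε : 0 ≤ ε) :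
    volume (Icc 0 1 \ ball z ε) ≤ 1 - ENNReal.ofReal (min ε 1) := by
  have h := measure_sdiff_add_inter (μ := volume) (Icc (0 : ℝ) 1)
    (measurableSet_ball (x := z) (ε := ε))
  rw [Real.volume_Icc, sub_zero, ENNReal.ofReal_one] at h
  refine ENNReal.le_sub_of_add_le_right ENNReal.ofReal_ne_top ?_
  rw [← h]
  gcongr
  exact volume_Icc_zero_one_inter_ball_ge hz hε

theorem liminf_le_of_forall_frequently_le {ι β : Type*} [ConditionallyCompleteLinearOrder β]
    [TopologicalSpace β] [OrderTopology β] {l : Filter ι} {u : ι → β} {a : ℕ → β} {b : β}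
    (hu : l.IsBoundedUnder (· ≥ ·) u) (ha : Tendsto a atTop (𝓝 b))
    (h : ∀ k, ∃ᶠ i in l, u i ≤ a k) : l.liminf u ≤ b :=
  ge_of_tendsto' ha fun k ↦ liminf_le_of_frequently_le (h k) hu

theorem le_limsup_of_forall_frequently_le {ι β : Type*} [ConditionallyCompleteLinearOrder β]
    [TopologicalSpace β] [OrderTopology β] {l : Filter ι} {u : ι → β} {a : ℕ → β} {b : β}
    (hu : l.IsBoundedUnder (· ≤ ·) u) (ha : Tendsto a atTop (𝓝 b))
    (h : ∀ k, ∃ᶠ i in l, a k ≤ u i) : b ≤ l.limsup u :=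
  le_of_tendsto' ha fun k ↦ le_limsup_of_frequently_le (h k) hu

section UnitInterval

variable {f : ℝ → ℝ} {x : ℝ}

theorem volume_setOf_eventually_dist_mem_eq_zero (hf : ContinuousOn f (Icc 0 1))
    (hmaps : MapsTo f (Icc 0 1) (Icc 0 1))
    (hfull : ∀ A ⊆ Icc (0 : ℝ) 1, MeasurableSet A → 0 < volume A →
      atTop.limsup (fun n ↦ volume (f^[n] '' A)) = 1)
    (hx : x ∈ Icc (0 : ℝ) 1) {S : Set ℝ} (hS : IsClosed S) {c : ℝ≥0∞} (hc : c < 1)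
    (hSc : ∀ z ∈ Icc (0 : ℝ) 1, volume (Icc 0 1 ∩ {w | dist w z ∈ S}) ≤ c) :
    volume {y ∈ Icc (0 : ℝ) 1 | ∀ᶠ n in atTop, dist (f^[n] y) (f^[n] x) ∈ S} = 0 := by
  have hunion : {y ∈ Icc (0 : ℝ) 1 | ∀ᶠ n in atTop, dist (f^[n] y) (f^[n] x) ∈ S} =
      ⋃ N, {y ∈ Icc 0 1 | ∀ n ≥ N, dist (f^[n] y) (f^[n] x) ∈ S} := by
    ext y; simp [eventually_atTop]
  rw [hunion]
  refine measure_iUnion_null fun N ↦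
    measure_eq_zero_of_eventually_mapsTo_of_measure_lt_one (T := fun n ↦ f^[n])
    hfull (sep_subset _ _) ?_ hc (fun n ↦ hSc _ (hmaps.iterate n hx)) ?_
  · exact (isClosed_setOf_forall_ge_mem isClosed_Icc
      (fun n ↦ (continuous_id.dist continuous_const).comp_continuousOn (hf.iterate hmaps n))
      (fun _ ↦ hS) N).measurableSet
  · filter_upwards [eventually_ge_atTop N] with n hn y hy
    exact ⟨hmaps.iterate n hy.1, hy.2 n hn⟩

theorem volume_setOf_eventually_dist_le_eq_zero (hf : ContinuousOn f (Icc 0 1))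
    (hmaps : MapsTo f (Icc 0 1) (Icc 0 1))
    (hfull : ∀ A ⊆ Icc (0 : ℝ) 1, MeasurableSet A → 0 < volume A →
      atTop.limsup (fun n ↦ volume (f^[n] '' A)) = 1)
    (hx : x ∈ Icc (0 : ℝ) 1) {r : ℝ} (hr : r < 1 / 2) :
    volume {y ∈ Icc (0 : ℝ) 1 | ∀ᶠ n in atTop, dist (f^[n] y) (f^[n] x) ≤ r} = 0 :=
  volume_setOf_eventually_dist_mem_eq_zero hf hmaps hfull hx (S := Iic r) isClosed_Iic
    (by rw [ENNReal.ofReal_lt_one]; linarith)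
    fun z _ ↦ (measure_mono inter_subset_right).trans_eq (Real.volume_closedBall z r)

theorem volume_setOf_eventually_le_dist_eq_zero (hf : ContinuousOn f (Icc 0 1))
    (hmaps : MapsTo f (Icc 0 1) (Icc 0 1))
    (hfull : ∀ A ⊆ Icc (0 : ℝ) 1, MeasurableSet A → 0 < volume A →
      atTop.limsup (fun n ↦ volume (f^[n] '' A)) = 1)
    (hx : x ∈ Icc (0 : ℝ) 1) {ε : ℝ} (hε : 0 < ε) :
    volume {y ∈ Icc (0 : ℝ) 1 | ∀ᶠ n in atTop, ε ≤ dist (f^[n] y) (f^[n] x)} = 0 := by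
  refine volume_setOf_eventually_dist_mem_eq_zero hf hmaps hfull hx (S := Ici ε) isClosed_Ici
    (c := 1 - ENNReal.ofReal (min ε 1))
    (ENNReal.sub_lt_self ENNReal.one_ne_top one_ne_zero (by simp [hε])) fun z hz ↦ ?_
  have hdiff : Icc 0 1 ∩ {w | dist w z ∈ Ici ε} = Icc 0 1 \ ball z ε := by
    ext w; simp [sdiff_eq]
  rw [hdiff]
  exact volume_Icc_zero_one_diff_ball_le hz hε.le

end UnitInterval

/-- If a continuous map of `I = [0,1]` is limsup full w.r.t. Lebesgue measure, then for
every `x ∈ I` there is a full measure set `C_x` of points `y` with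
`liminf |fⁿ(y) - fⁿ(x)| = 0` and `limsup |fⁿ(y) - fⁿ(x)| ≥ diam(I)/2 = 1/2`. -/
theorem limsup_full_typical_pairs
    (f : ℝ → ℝ) (hf : ContinuousOn f (Set.Icc 0 1))
    (hmaps : Set.MapsTo f (Set.Icc 0 1) (Set.Icc 0 1))
    (hfull : ∀ A : Set ℝ, A ⊆ Set.Icc 0 1 → MeasurableSet A → 0 < volume A →
      Filter.atTop.limsup (fun n : ℕ => volume (f^[n] '' A)) = 1) :
    ∀ x ∈ Set.Icc (0:ℝ) 1, ∃ C : Set ℝ, C ⊆ Set.Icc 0 1 ∧ volume C = 1 ∧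
      ∀ y ∈ C,
        Filter.atTop.liminf (fun n : ℕ => |f^[n] y - f^[n] x|) = 0 ∧
        (1:ℝ)/2 ≤ Filter.atTop.limsup (fun n : ℕ => |f^[n] y - f^[n] x|) := by
  intro x hx
  set Near : ℕ → Set ℝ := fun k ↦
    {y ∈ Icc 0 1 | ∀ᶠ n in atTop, dist (f^[n] y) (f^[n] x) ≤ 1 / 2 - 1 / (k + 1)}
  set Far : ℕ → Set ℝ := fun k ↦
    {y ∈ Icc 0 1 | ∀ᶠ n in atTop, 1 / (k + 1) ≤ dist (f^[n] y) (f^[n] x)}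
  have hpos : ∀ k : ℕ, (0 : ℝ) < 1 / (k + 1) := fun _ ↦ Nat.one_div_pos_of_nat
  have hnull : volume (⋃ k, (Near k ∪ Far k)) = 0 := measure_iUnion_null fun k ↦
    measure_union_null
      (volume_setOf_eventually_dist_le_eq_zero hf hmaps hfull hx (by linarith [hpos k]))
      (volume_setOf_eventually_le_dist_eq_zero hf hmaps hfull hx (hpos k))
  refine ⟨Icc 0 1 \ ⋃ k, (Near k ∪ Far k), sdiff_subset, ?_, ?_⟩
  · rw [measure_sdiff_null hnull, Real.volume_Icc]
    norm_num
  rintro y ⟨hy, hyNF⟩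
  simp only [mem_iUnion, mem_union, not_exists, not_or, Near, Far, mem_ofPred_eq, not_and,
    not_eventually, not_le] at hyNF
  have hdist : ∀ n, dist (f^[n] y) (f^[n] x) ≤ 1 := fun n ↦
    Real.dist_le_of_mem_Icc_01 (hmaps.iterate n hy) (hmaps.iterate n hx)
  have hbdd_above : atTop.IsBoundedUnder (· ≤ ·) fun n ↦ dist (f^[n] y) (f^[n] x) :=
    isBoundedUnder_of ⟨1, hdist⟩
  have hbdd_below : atTop.IsBoundedUnder (· ≥ ·) fun n ↦ dist (f^[n] y) (f^[n] x) :=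
    isBoundedUnder_of ⟨0, fun _ ↦ dist_nonneg⟩
  simp only [← Real.dist_eq]
  constructor
  · refine le_antisymm (liminf_le_of_forall_frequently_le hbdd_below
      tendsto_one_div_add_atTop_nhds_zero_nat fun k ↦ ((hyNF k).2 hy).mono fun _ ↦ le_of_lt) ?_
    exact le_liminf_of_le hbdd_above.isCoboundedUnder_ge (.of_forall fun _ ↦ dist_nonneg)
  · refine le_limsup_of_forall_frequently_le hbdd_above ?_
      fun k ↦ ((hyNF k).1 hy).mono fun _ ↦ le_of_lt
    simpa using tendsto_const_nhds.sub (tendsto_one_div_add_atTop_nhds_zero_nat (𝕜 := ℝ))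
end

section
/- Let f : I → I be a Borel map on I = [0,1]. If there exist a sequence of Borel sets A_k and integers n_k → ∞ with λ(A_k) → 0 and λ(f^{-n_k}(A_k)) ≥ 1 − 2^{-k-1}, then the set A = ⋂_k f^{-n_k}(A_k) satisfies λ(A) ≥ 1/2 and liminf_n λ(f^n(A)) = 0. -/
/-!
Since `λ(f^{-n_k}(A_k)ᶜ) ≤ 2^{-k-1}`, a union bound over `k ≥ 1` gives `λ(Aᶜ) ≤ 1/2`.
On the other hand `f^{n_k}(A) ⊆ A_k`, so `λ(f^{n_k}(A)) → 0` along `n_k → ∞`,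
which forces the liminf over all `n` to vanish.
-/

open MeasureTheory Set Filter
open scoped ENNReal Topology

theorem ENNReal.tsum_inv_two_pow_add_two :
    ∑' k : ℕ, ((2 : ℝ≥0∞) ^ (k + 2))⁻¹ = 2⁻¹ := by
  simp_rw [ENNReal.inv_pow, pow_add, ENNReal.tsum_mul_right, ENNReal.tsum_geometric_two, sq,
    ← mul_assoc, ENNReal.mul_inv_cancel two_ne_zero ENNReal.ofNat_ne_top, one_mul]

theorem MeasureTheory.one_sub_tsum_le_measure_iInter {α ι : Type*} [MeasurableSpace α]
    [Countable ι] {μ : Measure α} [IsProbabilityMeasure μ] {s : ι → Set α}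
    (hs : ∀ i, NullMeasurableSet (s i) μ) {ε : ι → ℝ≥0∞}
    (h : ∀ i, 1 - ε i ≤ μ (s i)) :
    1 - ∑' i, ε i ≤ μ (⋂ i, s i) := by
  have hcompl : ∀ i, μ (s i)ᶜ ≤ ε i := fun i => by
    rw [prob_compl_eq_one_sub₀ (hs i)]
    exact tsub_le_iff_tsub_le.1 (h i)
  have hunion : μ (⋃ i, (s i)ᶜ) ≤ ∑' i, ε i :=
    (measure_iUnion_le _).trans (ENNReal.tsum_le_tsum hcompl)
  calc 1 - ∑' i, ε i ≤ 1 - μ (⋃ i, (s i)ᶜ) := tsub_le_tsub_left hunion 1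
    _ = μ (⋂ i, s i) := by
        rw [← compl_iInter, prob_compl_eq_one_sub₀ (NullMeasurableSet.iInter hs),
          ENNReal.sub_sub_cancel ENNReal.one_ne_top prob_le_one]

theorem Filter.Tendsto.liminf_eq_bot_of_comp {ι α β : Type*} [CompleteLinearOrder β]
    [TopologicalSpace β] [OrderTopology β] {v : ι → α} {u : α → β} {f : Filter ι}
    [NeBot f] {g : Filter α} (hv : Tendsto v f g) (hu : Tendsto (u ∘ v) f (𝓝 ⊥)) :
    liminf u g = ⊥ :=
  le_bot_iff.1 <| hv.liminf_le_liminf_comp.trans hu.liminf_eq.le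

theorem no_acip_liminf_zero_general
    (f : ℝ → ℝ) (hf : Measurable f)
    (A : ℕ → Set ℝ) (hA : ∀ k, MeasurableSet (A k))
    (n : ℕ → ℕ) (hn : Filter.Tendsto n Filter.atTop Filter.atTop)
    (hsmall : Filter.Tendsto (fun k => (volume.restrict (Set.Icc (0:ℝ) 1)) (A k))
      Filter.atTop (nhds 0))
    (hbig : ∀ k, 1 ≤ k →
      (1 : ENNReal) - (2 ^ (k + 1))⁻¹ ≤
        (volume.restrict (Set.Icc (0:ℝ) 1)) (f^[n k] ⁻¹' (A k))) :
    (1 : ENNReal)/2 ≤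
      (volume.restrict (Set.Icc (0:ℝ) 1)) (⋂ k, ⋂ (_ : 1 ≤ k), f^[n k] ⁻¹' (A k)) ∧
    Filter.atTop.liminf (fun m : ℕ =>
      (volume.restrict (Set.Icc (0:ℝ) 1))
        (f^[m] '' (⋂ k, ⋂ (_ : 1 ≤ k), f^[n k] ⁻¹' (A k)))) = 0 := by
  set μ := volume.restrict (Icc (0:ℝ) 1)
  have : IsProbabilityMeasure μ := ⟨by simp [μ]⟩
  set S := ⋂ k, ⋂ (_ : 1 ≤ k), f^[n k] ⁻¹' (A k)
  constructor
  · have hS : S = ⋂ k, f^[n (k + 1)] ⁻¹' (A (k + 1)) :=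
      iInter_ge_eq_iInter_nat_add (fun k => f^[n k] ⁻¹' (A k)) 1
    calc (1 : ℝ≥0∞) / 2 = 1 - ∑' k : ℕ, ((2 : ℝ≥0∞) ^ (k + 2))⁻¹ := by
          rw [ENNReal.tsum_inv_two_pow_add_two, ENNReal.one_sub_inv_two, one_div]
      _ ≤ μ S := hS ▸ one_sub_tsum_le_measure_iInter
          (fun k => ((hf.iterate _) (hA _)).nullMeasurableSet)
          (fun k => hbig (k + 1) (Nat.le_add_left 1 k))
  · have himage : ∀ᶠ k in atTop, μ (f^[n k] '' S) ≤ μ (A k) :=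
      (eventually_ge_atTop 1).mono fun k hk =>
        measure_mono <| (image_mono (iInter₂_subset k hk)).trans (image_preimage_subset _ _)
    exact hn.liminf_eq_bot_of_comp <|
      tendsto_of_tendsto_of_tendsto_of_le_of_le' tendsto_const_nhds hsmall
        (Eventually.of_forall fun _ => zero_le) himage

/-- If there are Borel sets `A_k ⊆ [0,1]` and integers `n_k → ∞` with `λ(A_k) → 0` and
`λ(f^{-n_k}(A_k)) ≥ 1 - 2^{-k-1}` (for `k ≥ 1`), then `A = ⋂_{k≥1} f^{-n_k}(A_k)`
satisfies `λ(A) ≥ 1/2` and `liminf_n λ(fⁿ(A)) = 0`. -/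
theorem no_acip_liminf_zero
    (f : ℝ → ℝ) (hf : Measurable f) (hmaps : Set.MapsTo f (Set.Icc 0 1) (Set.Icc 0 1))
    (A : ℕ → Set ℝ) (hA : ∀ k, MeasurableSet (A k)) (hAsub : ∀ k, A k ⊆ Set.Icc 0 1)
    (n : ℕ → ℕ) (hn : Filter.Tendsto n Filter.atTop Filter.atTop)
    (hsmall : Filter.Tendsto (fun k => (volume.restrict (Set.Icc (0:ℝ) 1)) (A k))
      Filter.atTop (nhds 0))
    (hbig : ∀ k, 1 ≤ k →
      (1 : ENNReal) - (2 ^ (k + 1))⁻¹ ≤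
        (volume.restrict (Set.Icc (0:ℝ) 1)) (f^[n k] ⁻¹' (A k))) :
    (1 : ENNReal)/2 ≤
      (volume.restrict (Set.Icc (0:ℝ) 1)) (⋂ k, ⋂ (_ : 1 ≤ k), f^[n k] ⁻¹' (A k)) ∧
    Filter.atTop.liminf (fun m : ℕ =>
      (volume.restrict (Set.Icc (0:ℝ) 1))
        (f^[m] '' (⋂ k, ⋂ (_ : 1 ≤ k), f^[n k] ⁻¹' (A k)))) = 0 :=
  no_acip_liminf_zero_general f hf A hA n hn hsmall hbig
end

section
/- Let Q : ℕ → ℕ ∪ {0} with Q(k) < k, and define cutting times by S_0 = 1 and S_k = S_{k-1} + S_{Q(k)}. Let E = {e ∈ {0,1}^ℕ : e_i = 1 implies e_j = 0 for all Q(i+1) ≤ j < i}. Then for every e ∈ E and every j ≥ 0, one has e_0 S_0 + e_1 S_1 + ... + e_j S_j < S_{j+1}. -/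
open Finset

theorem Finset.sum_range_eq_sum_range_of_eq_zero_on_Ico {M : Type*} [AddCommMonoid M]
    {f : ℕ → M} {m n : ℕ} (hmn : m ≤ n) (hf : ∀ i, m ≤ i → i < n → f i = 0) :
    ∑ i ∈ range n, f i = ∑ i ∈ range m, f i := by
  rw [← sum_range_add_sum_Ico f hmn,
    sum_eq_zero fun i hi => hf i (mem_Ico.mp hi).1 (mem_Ico.mp hi).2, add_zero]

/- Strong induction on `n`: if `e n = 0` the sum does not grow while `S` does not shrink;
if `e n = 1`, admissibility kills the terms `Q (n+1) ≤ i < n`, so the sum is the shorter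
sum up to `Q (n+1)` plus `S n`, which is `< S (Q (n+1)) + S n = S (n+1)`. -/
theorem sum_range_mul_cuttingTimes_lt
    {Q : ℕ → ℕ} (hQ : ∀ k, Q (k + 1) ≤ k)
    {S : ℕ → ℕ} (hS0 : 0 < S 0) (hS : ∀ k, S (k + 1) = S k + S (Q (k + 1)))
    {e : ℕ → ℕ} (he01 : ∀ i, e i ≤ 1)
    (hadm : ∀ i, e i = 1 → ∀ j, Q (i + 1) ≤ j → j < i → e j = 0) (n : ℕ) :
    ∑ i ∈ range n, e i * S i < S n := by
  induction n using Nat.strong_induction_on with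
  | _ n ih =>
  rcases n with _ | n
  · simpa using hS0
  rw [sum_range_succ, hS n]
  rcases Nat.le_one_iff_eq_zero_or_eq_one.mp (he01 n) with hen | hen
  · have := ih n n.lt_succ_self
    rw [hen]
    omega
  · have hshort : ∑ i ∈ range n, e i * S i = ∑ i ∈ range (Q (n + 1)), e i * S i :=
      sum_range_eq_sum_range_of_eq_zero_on_Ico (hQ n) fun i hi hin => by
        rw [hadm n hen i hi hin, zero_mul]
    have := ih (Q (n + 1)) (Nat.lt_succ_of_le (hQ n))
    rw [hshort, hen, one_mul]
    omega

/-- In the enumeration scale based on the cutting times `S_k` (with kneading map `Q`),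
every admissible code `e` satisfies `e_0 S_0 + ... + e_j S_j < S_{j+1}`. -/
theorem enumeration_scale_partial_sums_lt
    (Q : ℕ → ℕ) (hQ : ∀ k : ℕ, Q (k + 1) ≤ k)
    (S : ℕ → ℕ) (hS0 : S 0 = 1) (hS : ∀ k : ℕ, S (k + 1) = S k + S (Q (k + 1)))
    (e : ℕ → ℕ) (he01 : ∀ i, e i ≤ 1)
    (hadm : ∀ i, e i = 1 → ∀ j, Q (i + 1) ≤ j → j < i → e j = 0) :
    ∀ j : ℕ, (∑ i ∈ Finset.range (j + 1), e i * S i) < S (j + 1) := fun j =>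
  sum_range_mul_cuttingTimes_lt hQ (hS0 ▸ Nat.one_pos) hS he01 hadm (j + 1)
end
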